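/- arXiv:2007.10853 — 2 statements merged into one kernel-verified Lean document; each statement's English description precedes it below -/
import Mathlib

section
/- Let à be a real m×m matrix with N(Ã) ∩ R(Ã) = {0}, let b ∈ ℝᵐ, let b|_{R(Ã)} denote the orthogonal projection of b onto R(Ã), and assume grade(Ã, b|_{R(Ã)}) = k. Then dim(Ã·K_k(Ã, b|_{R(Ã)})) = k, i.e., the vectors Ãb|_{R(Ã)}, Ã²b|_{R(Ã)}, …, Ã^k b|_{R(Ã)} are linearly independent. -/
open Matrix

/-- The `i`-th Krylov subspace `K_i(A, v) = span {v, Av, …, A^{i-1} v}`. -/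
noncomputable def Krylov {m : ℕ} (A : Matrix (Fin m) (Fin m) ℝ)
    (v : EuclideanSpace ℝ (Fin m)) (i : ℕ) : Submodule ℝ (EuclideanSpace ℝ (Fin m)) :=
  Submodule.span ℝ {w | ∃ j < i, w = (A ^ j).toEuclideanLin v}

lemma toEuclideanLin_mul_apply {m : ℕ} (A B : Matrix (Fin m) (Fin m) ℝ)
    (v : EuclideanSpace ℝ (Fin m)) :
    (A * B).toEuclideanLin v = A.toEuclideanLin (B.toEuclideanLin v) := by
  simp [Matrix.toEuclideanLin_apply, Matrix.mulVec_mulVec]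

lemma Krylov_succ {m : ℕ} (A : Matrix (Fin m) (Fin m) ℝ)
    (v : EuclideanSpace ℝ (Fin m)) (i : ℕ) :
    Krylov A v (i + 1) = Krylov A v i ⊔ (ℝ ∙ ((A ^ i).toEuclideanLin v)) := by
  have hset : {w | ∃ j < i + 1, w = (A ^ j).toEuclideanLin v}
      = {w | ∃ j < i, w = (A ^ j).toEuclideanLin v} ∪ {(A ^ i).toEuclideanLin v} := by
    ext w
    constructor
    · rintro ⟨j, hj, rfl⟩
      rcases Nat.lt_succ_iff_lt_or_eq.mp hj with h | rfl
      · exact Or.inl ⟨j, h, rfl⟩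
      · exact Or.inr rfl
    · rintro (⟨j, hj, rfl⟩ | rfl)
      · exact ⟨j, Nat.lt_succ_of_lt hj, rfl⟩
      · exact ⟨i, Nat.lt_succ_self i, rfl⟩
  rw [Krylov, Krylov, hset, Submodule.span_union]

lemma Krylov_le_range {m : ℕ} (A : Matrix (Fin m) (Fin m) ℝ)
    (v : EuclideanSpace ℝ (Fin m)) (hv : v ∈ LinearMap.range A.toEuclideanLin) (i : ℕ) :
    Krylov A v i ≤ LinearMap.range A.toEuclideanLin := by
  rw [Krylov, Submodule.span_le]
  rintro w ⟨j, hj, rfl⟩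
  cases j with
  | zero =>
      have h0 : (A ^ 0).toEuclideanLin v = v := by
        simp [Matrix.toEuclideanLin_apply]
      rw [h0]; exact hv
  | succ n =>
      rw [pow_succ', toEuclideanLin_mul_apply]
      exact ⟨_, rfl⟩

lemma finrank_krylov {m : ℕ} (A : Matrix (Fin m) (Fin m) ℝ)
    (v : EuclideanSpace ℝ (Fin m)) (k : ℕ)
    (hmin : ∀ j < k, Krylov A v (j + 1) ≠ Krylov A v j) :
    Module.finrank ℝ (Krylov A v k) = k := by
  induction k with
  | zero =>
      have : Krylov A v 0 = ⊥ := by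
        rw [Krylov]
        convert Submodule.span_empty
        ext w; simp
      rw [this]; simp
  | succ n ih =>
      have ihn := ih (fun j hj => hmin j (Nat.lt_succ_of_lt hj))
      have hle : Krylov A v n ≤ Krylov A v (n + 1) := by
        rw [Krylov_succ]; exact le_sup_left
      have hlt : Krylov A v n < Krylov A v (n + 1) :=
        lt_of_le_of_ne hle (Ne.symm (hmin n (Nat.lt_succ_self n)))
      have hsing : Module.finrank ℝ (ℝ ∙ (A ^ n).toEuclideanLin v) ≤ 1 := by
        by_cases h : (A ^ n).toEuclideanLin v = 0
        · rw [h, Submodule.span_zero_singleton]; simp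
        · rw [finrank_span_singleton h]
      have hsup := Submodule.finrank_sup_add_finrank_inf_eq (Krylov A v n)
        (ℝ ∙ (A ^ n).toEuclideanLin v)
      have h1 : Module.finrank ℝ (Krylov A v (n + 1)) ≤ n + 1 := by
        rw [Krylov_succ]
        omega
      have h2 : n < Module.finrank ℝ (Krylov A v (n + 1)) := by
        have := Submodule.finrank_lt_finrank_of_lt hlt
        omega
      omega

/-- If `N(Ã) ∩ R(Ã) = {0}` and `grade(Ã, b|_{R(Ã)}) = k`, then
`dim (Ã · K_k(Ã, b|_{R(Ã)})) = k`, i.e. `Ã b|_{R(Ã)}, …, Ã^k b|_{R(Ã)}` are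
linearly independent. -/
theorem finrank_map_krylov_of_ker_inf_range_eq_bot
    {m : ℕ} (A : Matrix (Fin m) (Fin m) ℝ) (b bR : EuclideanSpace ℝ (Fin m)) (k : ℕ)
    (hNR : LinearMap.ker A.toEuclideanLin ⊓ LinearMap.range A.toEuclideanLin = ⊥)
    -- `bR` is the orthogonal projection of `b` onto `R(Ã)`:
    (hbR : bR ∈ LinearMap.range A.toEuclideanLin)
    (hperp : b - bR ∈ (LinearMap.range A.toEuclideanLin)ᗮ)
    -- `grade(Ã, b|_{R(Ã)}) = k`:
    (hgrade : Krylov A bR (k + 1) = Krylov A bR k)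
    (hmin : ∀ j < k, Krylov A bR (j + 1) ≠ Krylov A bR j) :
    Module.finrank ℝ ((Krylov A bR k).map A.toEuclideanLin) = k := by
  set f := A.toEuclideanLin
  set p := Krylov A bR k
  have hp : Module.finrank ℝ p = k := finrank_krylov A bR k hmin
  have hpr : p ≤ LinearMap.range f := Krylov_le_range A bR hbR k
  have hker : LinearMap.ker (f.domRestrict p) = ⊥ := by
    rw [LinearMap.ker_eq_bot']
    rintro ⟨x, hx⟩ hfx
    have hx0 : x ∈ LinearMap.ker f ⊓ LinearMap.range f :=
      ⟨by simpa using hfx, hpr hx⟩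
    rw [hNR] at hx0
    exact Subtype.ext (by simpa using hx0)
  have hrn := LinearMap.finrank_range_add_finrank_ker (f.domRestrict p)
  rw [hker, LinearMap.range_domRestrict] at hrn
  simpa [hp] using hrn
end

section
/- Let à be a real m×m matrix with N(Ã) = N(Ãᵀ), let b ∈ ℝᵐ, let b|_{R(Ã)} denote the orthogonal projection of b onto R(Ã), and assume grade(Ã, b|_{R(Ã)}) = k. Then dim(Ã·K_{k+1}(Ã, b)) = k. -/
open Matrix

/-!
Since `N(Ãᵀ) = R(Ã)ᗮ`, the hypothesis says `N(Ã) = R(Ã)ᗮ`. Hence `Ãb = Ãb|_{R(Ã)}`, so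
`Ã·K_{k+1}(Ã, b) = Ã·K_{k+1}(Ã, b|_{R(Ã)}) = Ã·K_k(Ã, b|_{R(Ã)})`, and `Ã` is injective on
`K_k(Ã, b|_{R(Ã)}) ⊆ R(Ã)`, a space of dimension `k` because the Krylov spaces grow strictly
up to the grade.
-/

theorem Matrix.ker_toEuclideanLin_transpose {m n : Type*} [Fintype m] [DecidableEq m]
    [Fintype n] [DecidableEq n]
    (A : Matrix m n ℝ) :
    LinearMap.ker Aᵀ.toEuclideanLin = (LinearMap.range A.toEuclideanLin)ᗮ := by
  rw [LinearMap.orthogonal_range, ← Matrix.toEuclideanLin_conjTranspose_eq_adjoint,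
    conjTranspose_eq_transpose_of_trivial]

theorem Submodule.finrank_map_eq_of_disjoint_ker {K V W : Type*} [DivisionRing K]
    [AddCommGroup V] [Module K V] [AddCommGroup W] [Module K W] (f : V →ₗ[K] W)
    {p : Submodule K V} (h : Disjoint p (LinearMap.ker f)) :
    Module.finrank K (p.map f) = Module.finrank K p := by
  rw [← LinearMap.range_domRestrict]
  exact LinearMap.finrank_range_of_inj (LinearMap.injective_domRestrict_iff.mpr h)

namespace Krylov

variable {m : ℕ} (A : Matrix (Fin m) (Fin m) ℝ) (v : EuclideanSpace ℝ (Fin m))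

theorem zero : Krylov A v 0 = ⊥ := by
  simp [Krylov]

theorem succ (i : ℕ) :
    Krylov A v (i + 1) = Krylov A v i ⊔ ℝ ∙ (A ^ i).toEuclideanLin v := by
  rw [Krylov, Krylov, ← Submodule.span_union]
  congr 1
  ext w
  simp only [Set.mem_ofPred_eq, Set.mem_union, Set.mem_singleton_iff, Nat.lt_succ_iff_lt_or_eq,
    or_and_right, exists_or, exists_eq_left]

theorem map_toEuclideanLin (i : ℕ) :
    (Krylov A v i).map A.toEuclideanLin = Krylov A (A.toEuclideanLin v) i := by
  rw [Krylov, Krylov, Submodule.map_span]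
  congr 1
  ext w
  have hcomm (j : ℕ) : A.toEuclideanLin ((A ^ j).toEuclideanLin v) =
      (A ^ j).toEuclideanLin (A.toEuclideanLin v) := by
    rw [toLpLin_pow, ← Module.End.mul_apply, ← pow_succ', pow_succ, Module.End.mul_apply]
  simp only [Set.mem_image, Set.mem_ofPred_eq]
  constructor
  · rintro ⟨u, ⟨j, hj, rfl⟩, rfl⟩
    exact ⟨j, hj, hcomm j⟩
  · rintro ⟨j, hj, rfl⟩
    exact ⟨_, ⟨j, hj, rfl⟩, hcomm j⟩

theorem le_range_of_mem_range (hv : v ∈ LinearMap.range A.toEuclideanLin) (i : ℕ) :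
    Krylov A v i ≤ LinearMap.range A.toEuclideanLin := by
  obtain ⟨c, rfl⟩ := hv
  rw [← map_toEuclideanLin]
  exact LinearMap.map_le_range

theorem finrank_eq_of_forall_succ_ne (k : ℕ) (h : ∀ j < k, Krylov A v (j + 1) ≠ Krylov A v j) :
    Module.finrank ℝ (Krylov A v k) = k := by
  induction k with
  | zero => rw [zero, finrank_bot]
  | succ n ih =>
    have hnew : (A ^ n).toEuclideanLin v ∉ Krylov A v n := by
      intro hmem
      refine h n n.lt_succ_self ?_
      rw [succ, sup_eq_left, Submodule.span_singleton_le_iff_mem]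
      exact hmem
    rw [succ, Submodule.finrank_sup_span_singleton hnew,
      ih fun j hj => h j (Nat.lt_succ_of_lt hj)]

end Krylov

/-- If `N(Ã) = N(Ãᵀ)` and `grade(Ã, b|_{R(Ã)}) = k`, then
`dim (Ã · K_{k+1}(Ã, b)) = k`. -/
theorem finrank_map_krylov_succ_of_ker_eq_ker_transpose
    {m : ℕ} (A : Matrix (Fin m) (Fin m) ℝ) (b bR : EuclideanSpace ℝ (Fin m)) (k : ℕ)
    (hN : LinearMap.ker A.toEuclideanLin = LinearMap.ker Aᵀ.toEuclideanLin)
    -- `bR` is the orthogonal projection of `b` onto `R(Ã)`: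
    (hbR : bR ∈ LinearMap.range A.toEuclideanLin)
    (hperp : b - bR ∈ (LinearMap.range A.toEuclideanLin)ᗮ)
    -- `grade(Ã, b|_{R(Ã)}) = k`:
    (hgrade : Krylov A bR (k + 1) = Krylov A bR k)
    (hmin : ∀ j < k, Krylov A bR (j + 1) ≠ Krylov A bR j) :
    Module.finrank ℝ ((Krylov A b (k + 1)).map A.toEuclideanLin) = k := by
  set T := A.toEuclideanLin
  have hker : LinearMap.ker T = (LinearMap.range T)ᗮ := hN.trans A.ker_toEuclideanLin_transpose
  have hTb : T b = T bR := by
    rw [← sub_eq_zero, ← map_sub, ← LinearMap.mem_ker, hker]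
    exact hperp
  have hdisj : Disjoint (Krylov A bR k) (LinearMap.ker T) := by
    rw [hker]
    exact (Submodule.orthogonal_disjoint _).mono_left (Krylov.le_range_of_mem_range A bR hbR k)
  calc Module.finrank ℝ ((Krylov A b (k + 1)).map T)
      = Module.finrank ℝ ((Krylov A bR k).map T) := by
        rw [Krylov.map_toEuclideanLin, hTb, ← Krylov.map_toEuclideanLin, hgrade]
    _ = Module.finrank ℝ (Krylov A bR k) := Submodule.finrank_map_eq_of_disjoint_ker T hdisj
    _ = k := Krylov.finrank_eq_of_forall_succ_ne A bR k hmin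
end
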